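/- For every fixed ε > 0, the corrected periodic Kramers prefactor has the finite limit lim_{L → 2π⁻} (1/2π) · (λ₁(L)/(λ₁(L)+√(3ε/(4L)))) · Ψ̃₊(λ₁(L)/√(3ε/(4L))) · sinh(L/√2)/sin(L/2) = sinh(√2 π)/(√3 π) · ε^{−1/2}, where λ₁(L) = −1 + (2π/L)². -/

import Mathlib

open Real Filter Set

/-- The error function `erf(z) = (2/√π)∫₀^z e^{−t²} dt`. -/
noncomputable def erf (z : ℝ) : ℝ :=
  (2 / Real.sqrt π) * ∫ t in (0:ℝ)..z, Real.exp (-t ^ 2)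

/-- The universal scaling function
`Ψ̃₊(α) = √(π/8)(1+α)e^{α²/8}[1 + erf(−2^{−3/2}α)]`. -/
noncomputable def PsiTildePlus (α : ℝ) : ℝ :=
  Real.sqrt (π / 8) * (1 + α) * Real.exp (α ^ 2 / 8) *
    (1 + erf (-α / 2 ^ ((3 : ℝ) / 2)))

/-! `λ₁(L) = -1 + (2π/L)²` and `sin(L/2)` both vanish simply at `L = 2π`, with derivatives
`-1/π` and `-1/2`, so their quotient tends to `2/π`. The prefactor is this quotient times a
factor continuous at `2π`; since `λ₁(2π) = 0`, that factor tends to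
`(1/2π) · √(π/8) / √(3ε/8π) · sinh(√2 π)`, using `Ψ̃₊(0) = √(π/8)`. -/

open Topology

theorem HasDerivAt.tendsto_div_of_eq_zero {𝕜 : Type*} [NontriviallyNormedField 𝕜]
    {f g : 𝕜 → 𝕜} {f' g' a : 𝕜} (hf : HasDerivAt f f' a) (hg : HasDerivAt g g' a)
    (hfa : f a = 0) (hga : g a = 0) (hg' : g' ≠ 0) :
    Tendsto (fun x => f x / g x) (𝓝[≠] a) (𝓝 (f' / g')) := by
  have hslope := (hasDerivAt_iff_tendsto_slope.1 hf).div (hasDerivAt_iff_tendsto_slope.1 hg) hg'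
  refine hslope.congr' ?_
  filter_upwards [self_mem_nhdsWithin] with x hx
  rw [Pi.div_apply, slope_def_field, slope_def_field, hfa, hga, sub_zero, sub_zero,
    div_div_div_cancel_right₀ (sub_ne_zero.2 hx)]

theorem continuous_erf : Continuous erf :=
  continuous_const.mul (intervalIntegral.continuous_primitive
    (fun a b => Continuous.intervalIntegrable (by fun_prop) a b) 0)

theorem erf_zero : erf 0 = 0 := by simp [erf]

theorem continuous_PsiTildePlus : Continuous PsiTildePlus := by
  have := continuous_erf
  unfold PsiTildePlus
  fun_prop

theorem PsiTildePlus_zero : PsiTildePlus 0 = √(π / 8) := by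
  simp [PsiTildePlus, erf_zero]

theorem hasDerivAt_neg_one_add_div_sq (c : ℝ) {x : ℝ} (hx : x ≠ 0) :
    HasDerivAt (fun L : ℝ => -1 + (c / L) ^ 2) (-2 * c ^ 2 / x ^ 3) x := by
  have h := (((hasDerivAt_inv hx).const_mul c).fun_pow 2).const_add (-1)
  simp only [← div_eq_mul_inv] at h
  exact h.congr_deriv (by norm_num; field_simp)

theorem hasDerivAt_sin_half (x : ℝ) :
    HasDerivAt (fun L : ℝ => Real.sin (L / 2)) (Real.cos (x / 2) / 2) x :=
  ((hasDerivAt_id' x).div_const 2).sin.congr_deriv (mul_one_div _ _)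

theorem tendsto_lambda_div_sin_half :
    Tendsto (fun L : ℝ => (-1 + (2 * π / L) ^ 2) / Real.sin (L / 2)) (𝓝[<] (2 * π))
      (𝓝 (2 / π)) := by
  have h := (hasDerivAt_neg_one_add_div_sq (2 * π) two_pi_pos.ne').tendsto_div_of_eq_zero
    (hasDerivAt_sin_half (2 * π)) (by simp) (by simp [mul_div_cancel_left₀ π two_ne_zero])
    (by simp [mul_div_cancel_left₀ π two_ne_zero])
  rw [show -2 * (2 * π) ^ 2 / (2 * π) ^ 3 / (Real.cos (2 * π / 2) / 2) = 2 / π by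
    rw [mul_div_cancel_left₀ π two_ne_zero, cos_pi]; field_simp] at h
  exact h.mono_left (nhdsWithin_mono _ fun _ hL => ne_of_lt hL)

theorem tendsto_kramers_regular_factor {ε : ℝ} (hε : 0 < ε) :
    Tendsto (fun L : ℝ => 1 / (2 * π) *
        ((-1 + (2 * π / L) ^ 2) + √(3 * ε / (4 * L)))⁻¹ *
        PsiTildePlus ((-1 + (2 * π / L) ^ 2) / √(3 * ε / (4 * L))) * Real.sinh (L / √2))
      (𝓝 (2 * π))
      (𝓝 (1 / (2 * π) * (√(3 * ε / (8 * π)))⁻¹ * √(π / 8) * Real.sinh (√2 * π))) := by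
  have hs₀ : √(3 * ε / (8 * π)) ≠ 0 := by positivity
  have hlam : Tendsto (fun L : ℝ => -1 + (2 * π / L) ^ 2) (𝓝 (2 * π)) (𝓝 0) := by
    simpa using (hasDerivAt_neg_one_add_div_sq (2 * π) two_pi_pos.ne').continuousAt.tendsto
  have hs :
      Tendsto (fun L : ℝ => √(3 * ε / (4 * L))) (𝓝 (2 * π)) (𝓝 √(3 * ε / (8 * π))) := by
    have h : ContinuousAt (fun L : ℝ => √(3 * ε / (4 * L))) (2 * π) := by
      fun_prop (disch := positivity)
    convert h.tendsto using 3
    ring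
  have hsinh :
      Tendsto (fun L : ℝ => Real.sinh (L / √2)) (𝓝 (2 * π)) (𝓝 (Real.sinh (√2 * π))) := by
    have h : Continuous (fun L : ℝ => Real.sinh (L / √2)) := by fun_prop
    convert h.tendsto (2 * π) using 3
    field_simp
    rw [sq_sqrt zero_le_two]
  have hinv := (hlam.add hs).inv₀ (by simpa using hs₀)
  have hPsi := (continuous_PsiTildePlus.tendsto _).comp (hlam.div hs hs₀)
  have h := (((tendsto_const_nhds (x := 1 / (2 * π))).mul hinv).mul hPsi).mul hsinh
  simpa [PsiTildePlus_zero] using h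

theorem stmt_15 (ε : ℝ) (hε : 0 < ε) :
    Tendsto (fun L : ℝ =>
        (1 / (2 * π)) *
          ((-1 + (2 * π / L) ^ 2) /
            ((-1 + (2 * π / L) ^ 2) + Real.sqrt (3 * ε / (4 * L)))) *
          PsiTildePlus ((-1 + (2 * π / L) ^ 2) / Real.sqrt (3 * ε / (4 * L))) *
          Real.sinh (L / Real.sqrt 2) / Real.sin (L / 2))
      (nhdsWithin (2 * π) (Iio (2 * π)))
      (nhds (Real.sinh (Real.sqrt 2 * π) / (Real.sqrt 3 * π) * ε ^ (-(1 : ℝ) / 2))) := by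
  have h := ((tendsto_kramers_regular_factor hε).mono_left nhdsWithin_le_nhds).mul
    tendsto_lambda_div_sin_half
  have hsqrt : √(π / 8) / √(3 * ε / (8 * π)) = π / (√3 * √ε) := by
    rw [← sqrt_div' _ (by positivity), sqrt_eq_iff_mul_self_eq_of_pos (by positivity)]
    field_simp
    rw [sq_sqrt zero_le_three, sq_sqrt hε.le]
  have hlim : Real.sinh (√2 * π) / (√3 * π) * ε ^ (-(1 : ℝ) / 2) =
      1 / (2 * π) * (√(3 * ε / (8 * π)))⁻¹ * √(π / 8) * Real.sinh (√2 * π) * (2 / π) := by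
    rw [neg_div, rpow_neg hε.le, ← sqrt_eq_rpow]
    calc
      _ = 1 / (2 * π) * (√(π / 8) / √(3 * ε / (8 * π))) * Real.sinh (√2 * π) * (2 / π) := by
        rw [hsqrt]; field_simp
      _ = _ := by ring
  rw [hlim]
  exact h.congr fun L => by ring
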